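/- arXiv:1212.1650 — 2 statements merged into one kernel-verified Lean document; each statement's English description precedes it below -/
import Mathlib

section
/- For n ≥ 7 odd, the index of the direct sum Q_{n−1} ⊕ K (the (n−1)-dimensional algebra Q_{n−1} extended by a 1-dimensional center) equals 3. -/
/-!
The index is the minimal dimension of the radical of the Kirillov form `B_f(u, v) = f ⁅u, v⁆`.
Since `x_{n-1}` and `x_n` are central they lie in every radical; their span has odd codimension
`n - 2`, and an alternating form on an odd-dimensional complement is degenerate, so every radical
has dimension at least `3`. Conversely, if `f(x_{n-1}) ≠ 0` then on `span{x_2, …, x_{n-2}}` the form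
`B_f` pairs `x_a` only with `x_{n-a}`, with nonzero value, so it is nondegenerate on this
`(n - 3)`-dimensional subspace and the radical has dimension at most `3`.
-/

open Module

noncomputable def lieStab (K : Type*) {L : Type*} [Field K] [LieRing L] [LieAlgebra K L]
    (f : Module.Dual K L) : Submodule K L where
  carrier := {x | ∀ y, f ⁅x, y⁆ = 0}
  add_mem' := by
    intro a b ha hb y
    rw [add_lie, map_add, ha y, hb y, add_zero]
  zero_mem' := by intro y; simp
  smul_mem' := by
    intro t a ha y
    rw [smul_lie, map_smul, ha y, smul_zero]

noncomputable def lieIndex (K L : Type*) [Field K] [LieRing L] [LieAlgebra K L] : ℕ :=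
  ⨅ f : Module.Dual K L, Module.finrank K (lieStab K f)

open Submodule

namespace LinearMap

variable {K V : Type*} [Field K] [AddCommGroup V] [Module K V] {B : V →ₗ[K] V →ₗ[K] K}

theorem IsAlt.ker_ne_bot_of_odd_finrank [NeZero (2 : K)] [FiniteDimensional K V]
    (hB : B.IsAlt) (hodd : Odd (finrank K V)) : ker B ≠ ⊥ := by
  rw [Ne, ← separatingLeft_iff_ker_eq_bot, separatingLeft_iff_det_ne_zero (finBasis K V), not_not]
  set M := toMatrix₂ (finBasis K V) (finBasis K V) B
  have hskew : M.transpose = -M := by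
    ext i j
    simp only [M, Matrix.transpose_apply, Matrix.neg_apply, toMatrix₂_apply, hB.neg]
  have hdet : M.det = -M.det := by
    calc M.det = (-M).det := by rw [← hskew, Matrix.det_transpose]
      _ = -M.det := by rw [Matrix.det_neg, Fintype.card_fin, hodd.neg_one_pow, neg_one_mul]
  have h2 : (2 : K) * M.det = 0 := by linear_combination hdet
  exact (mul_eq_zero.mp h2).resolve_left two_ne_zero

/-- Restrict `B` to a complement `C` of `Z`: a radical vector of `B|C`, which exists by parity,
is orthogonal to `C` and, through `Z ≤ ker B` and skewness, to `Z`. -/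
theorem IsAlt.finrank_lt_finrank_ker [NeZero (2 : K)] [FiniteDimensional K V] (hB : B.IsAlt)
    {Z : Submodule K V} (hZ : Z ≤ ker B) (hodd : Odd (finrank K V - finrank K Z)) :
    finrank K Z < finrank K (ker B) := by
  obtain ⟨C, hC⟩ := Z.exists_isCompl
  have hCodd : Odd (finrank K C) := by
    rwa [← Submodule.finrank_add_eq_of_isCompl hC, Nat.add_sub_cancel_left] at hodd
  have hBC : (B.domRestrict₁₂ C C).IsAlt := fun w => hB w
  obtain ⟨w, hw, hw0⟩ := Submodule.ne_bot_iff _ |>.mp (hBC.ker_ne_bot_of_odd_finrank hCodd)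
  have hwker : (w : V) ∈ ker B := by
    refine mem_ker.mpr (ext fun y => ?_)
    obtain ⟨z, hz, c, hc, rfl⟩ := mem_sup.mp (hC.sup_eq_top ▸ mem_top : y ∈ Z ⊔ C)
    have hwc : B w c = 0 := congr($(mem_ker.mp hw) ⟨c, hc⟩)
    rw [map_add, ← hB.neg, mem_ker.mp (hZ hz), hwc]
    simp
  have hwZ : (w : V) ∉ Z := fun h =>
    hw0 (Subtype.ext (Submodule.disjoint_def.mp hC.disjoint _ h w.2))
  exact Submodule.finrank_lt_finrank_of_lt
    (SetLike.lt_iff_le_and_exists.mpr ⟨hZ, (w : V), hwker, hwZ⟩)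

theorem finrank_ker_add_finrank_le [FiniteDimensional K V] {W : Submodule K V}
    (hW : (B.domRestrict₁₂ W W).SeparatingLeft) :
    finrank K (ker B) + finrank K W ≤ finrank K V := by
  refine Submodule.finrank_add_finrank_le_of_disjoint (disjoint_def.mpr fun v hv hvW => ?_)
  exact congr_arg Subtype.val (hW ⟨v, hvW⟩ fun w => congr($(mem_ker.mp hv) w))

theorem separatingLeft_domRestrict_span {ι : Type*} [Fintype ι] (e : ι → V) (σ : Equiv.Perm ι)
    (hzero : ∀ i j, i ≠ σ j → B (e i) (e j) = 0) (hdiag : ∀ j, B (e (σ j)) (e j) ≠ 0) :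
    (B.domRestrict₁₂ (span K (Set.range e)) (span K (Set.range e))).SeparatingLeft := by
  rintro ⟨v, hv⟩ hvW
  obtain ⟨c, rfl⟩ := (mem_span_range_iff_exists_fun K).mp hv
  have hc : ∀ j, c (σ j) = 0 := fun j => by
    have h := hvW ⟨e j, subset_span (Set.mem_range_self j)⟩
    rw [domRestrict₁₂_apply, map_sum, sum_apply, Finset.sum_eq_single (σ j)
      (fun i _ hi => by rw [map_smul, smul_apply, hzero i j hi, smul_zero]) (by simp)] at h
    simpa [hdiag j] using h
  have hc0 : c = 0 := funext fun i => by simpa using hc (σ.symm i)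
  simp [hc0]

end LinearMap

section Lie

variable {K L : Type*} [Field K] [LieRing L] [LieAlgebra K L]

noncomputable def kirillovForm (f : Module.Dual K L) : L →ₗ[K] L →ₗ[K] K :=
  (LieAlgebra.ad K L : L →ₗ[K] Module.End K L).compr₂ f

@[simp]
theorem kirillovForm_apply (f : Module.Dual K L) (u v : L) : kirillovForm f u v = f ⁅u, v⁆ :=
  rfl

theorem kirillovForm_isAlt (f : Module.Dual K L) : (kirillovForm f).IsAlt := fun u => by
  simp

theorem lieStab_eq_ker_kirillovForm (f : Module.Dual K L) :
    lieStab K f = LinearMap.ker (kirillovForm f) := by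
  ext u
  simp [lieStab, LinearMap.ext_iff]

theorem center_le_lieStab (f : Module.Dual K L) :
    (LieAlgebra.center K L : Submodule K L) ≤ lieStab K f := fun z hz y => by
  rw [← lie_skew, (LieModule.mem_maxTrivSubmodule K L L z).mp hz y, neg_zero, map_zero]

theorem lieIndex_le_finrank_lieStab (f : Module.Dual K L) :
    lieIndex K L ≤ finrank K (lieStab K f) :=
  ciInf_le (OrderBot.bddBelow _) f

theorem le_lieIndex {m : ℕ} (h : ∀ f : Module.Dual K L, m ≤ finrank K (lieStab K f)) :
    m ≤ lieIndex K L :=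
  le_ciInf h

variable [FiniteDimensional K L]

theorem finrank_lt_finrank_lieStab [NeZero (2 : K)] (f : Module.Dual K L) {Z : Submodule K L}
    (hZ : Z ≤ LieAlgebra.center K L) (hodd : Odd (finrank K L - finrank K Z)) :
    finrank K Z < finrank K (lieStab K f) := by
  rw [lieStab_eq_ker_kirillovForm]
  exact (kirillovForm_isAlt f).finrank_lt_finrank_ker
    (lieStab_eq_ker_kirillovForm f ▸ hZ.trans (center_le_lieStab f)) hodd

theorem finrank_lieStab_add_finrank_le (f : Module.Dual K L) {W : Submodule K L}
    (hW : ((kirillovForm f).domRestrict₁₂ W W).SeparatingLeft) :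
    finrank K (lieStab K f) + finrank K W ≤ finrank K L :=
  lieStab_eq_ker_kirillovForm f ▸ LinearMap.finrank_ker_add_finrank_le hW

end Lie

section Filiform

variable {K L : Type*} [Field K] [LieRing L] [LieAlgebra K L] {n : ℕ} {x : ℕ → L}

theorem linearIndependent_shift (hli : LinearIndependent K fun i : Fin n => x (i.1 + 1))
    {a m : ℕ} (ha : 1 ≤ a) (hm : a + m ≤ n + 1) :
    LinearIndependent K fun i : Fin m => x (a + i) := by
  have hinj : Function.Injective fun i : Fin m => (⟨a - 1 + i, by omega⟩ : Fin n) :=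
    fun i j h => Fin.ext (by simpa using h)
  convert hli.comp _ hinj using 2 with i
  simp only [Function.comp_apply]
  congr 1
  omega

theorem mem_center_of_pred_le (hsp : span K (Set.range fun i : Fin n => x (i.1 + 1)) = ⊤)
    (hz : ∀ i j, 1 ≤ i → i ≤ n → 1 ≤ j → j ≤ n →
      ¬(i = 1 ∧ 2 ≤ j ∧ j ≤ n - 2) → ¬(j = 1 ∧ 2 ≤ i ∧ i ≤ n - 2) →
      ¬(2 ≤ i ∧ i ≤ (n - 1) / 2 ∧ j = n - i) → ¬(2 ≤ j ∧ j ≤ (n - 1) / 2 ∧ i = n - j) →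
      ⁅x i, x j⁆ = 0)
    (hn : 3 ≤ n) {k : ℕ} (hk : n - 1 ≤ k) (hkn : k ≤ n) : x k ∈ LieAlgebra.center K L := by
  have had : LieAlgebra.ad K L (x k) = 0 :=
    LinearMap.ext_on_range hsp fun j => hz k (j + 1) (by omega) hkn (by omega) (by omega)
      (by omega) (by omega) (by omega) (by omega)
  refine (LieModule.mem_maxTrivSubmodule K L L _).mpr fun y => ?_
  rw [← lie_skew, ← LieAlgebra.ad_apply K, had, LinearMap.zero_apply, neg_zero]

theorem exists_lie_sub_eq_smul (hno : Odd n)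
    (hbr2 : ∀ i, 2 ≤ i → i ≤ (n - 1) / 2 → ⁅x i, x (n - i)⁆ = ((-1 : K)) ^ (i + 1) • x (n - 1))
    {a : ℕ} (ha : 2 ≤ a) (han : a ≤ n - 2) : ∃ c : K, c ≠ 0 ∧ ⁅x (n - a), x a⁆ = c • x (n - 1) := by
  obtain ⟨t, rfl⟩ := hno
  have ht : (2 * t + 1 - 1) / 2 = t := by omega
  rw [ht] at hbr2
  rcases le_or_gt a t with hat | hat
  · refine ⟨-(-1) ^ (a + 1), by simp, ?_⟩
    rw [← lie_skew, hbr2 a ha hat, neg_smul]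
  · refine ⟨(-1) ^ (2 * t + 1 - a + 1), by simp, ?_⟩
    simpa [show 2 * t + 1 - (2 * t + 1 - a) = a by omega]
      using hbr2 (2 * t + 1 - a) (by omega) (by omega)

variable [FiniteDimensional K L]

theorem three_le_finrank_lieStab [NeZero (2 : K)] (hn : 3 ≤ n) (hno : Odd n)
    (hli : LinearIndependent K fun i : Fin n => x (i.1 + 1))
    (hsp : span K (Set.range fun i : Fin n => x (i.1 + 1)) = ⊤)
    (hz : ∀ i j, 1 ≤ i → i ≤ n → 1 ≤ j → j ≤ n →
      ¬(i = 1 ∧ 2 ≤ j ∧ j ≤ n - 2) → ¬(j = 1 ∧ 2 ≤ i ∧ i ≤ n - 2) →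
      ¬(2 ≤ i ∧ i ≤ (n - 1) / 2 ∧ j = n - i) → ¬(2 ≤ j ∧ j ≤ (n - 1) / 2 ∧ i = n - j) →
      ⁅x i, x j⁆ = 0)
    (hrank : finrank K L = n) (f : Module.Dual K L) : 3 ≤ finrank K (lieStab K f) := by
  let Z := span K (Set.range fun i : Fin 2 => x (n - 1 + i))
  have hZ : finrank K Z = 2 := by
    simpa using finrank_span_eq_card (linearIndependent_shift hli (a := n - 1) (m := 2)
      (by omega) (by omega))
  have hZc : Z ≤ LieAlgebra.center K L := span_le.mpr <| Set.range_subset_iff.mpr fun i =>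
    mem_center_of_pred_le hsp hz hn (by omega) (by omega)
  have hodd : Odd (finrank K L - finrank K Z) := by
    rw [hrank, hZ]
    exact Nat.Odd.sub_even (by omega) hno even_two
  have := finrank_lt_finrank_lieStab f hZc hodd
  omega

theorem finrank_lieStab_le_three (hn : 3 ≤ n) (hno : Odd n)
    (hli : LinearIndependent K fun i : Fin n => x (i.1 + 1))
    (hbr2 : ∀ i, 2 ≤ i → i ≤ (n - 1) / 2 → ⁅x i, x (n - i)⁆ = ((-1 : K)) ^ (i + 1) • x (n - 1))
    (hz : ∀ i j, 1 ≤ i → i ≤ n → 1 ≤ j → j ≤ n →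
      ¬(i = 1 ∧ 2 ≤ j ∧ j ≤ n - 2) → ¬(j = 1 ∧ 2 ≤ i ∧ i ≤ n - 2) →
      ¬(2 ≤ i ∧ i ≤ (n - 1) / 2 ∧ j = n - i) → ¬(2 ≤ j ∧ j ≤ (n - 1) / 2 ∧ i = n - j) →
      ⁅x i, x j⁆ = 0)
    (hrank : finrank K L = n) {f : Module.Dual K L} (hf : f (x (n - 1)) ≠ 0) :
    finrank K (lieStab K f) ≤ 3 := by
  have hW : finrank K (span K (Set.range fun i : Fin (n - 3) => x (2 + i))) = n - 3 := by
    simpa using finrank_span_eq_card (linearIndependent_shift hli (a := 2) (m := n - 3)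
      (by omega) (by omega))
  have hsep := LinearMap.separatingLeft_domRestrict_span (B := kirillovForm f)
    (fun i : Fin (n - 3) => x (2 + i)) Fin.revPerm
    (fun i j hij => by
      have hsum : i.1 + j.1 + 4 ≠ n := fun h => hij (Fin.ext (by simp; omega))
      simp [hz (2 + i) (2 + j) (by omega) (by omega) (by omega) (by omega) (by omega) (by omega)
        (by omega) (by omega)])
    (fun j => by
      obtain ⟨c, hc, hlie⟩ := exists_lie_sub_eq_smul hno hbr2 (a := 2 + j) (by omega) (by omega)
      have hrev : 2 + (Fin.revPerm j : ℕ) = n - (2 + j) := by simp; omega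
      rw [hrev, kirillovForm_apply, hlie, map_smul, smul_eq_mul]
      exact mul_ne_zero hc hf)
  have := finrank_lieStab_add_finrank_le f hsep
  omega

end Filiform

theorem stmt17_general (K : Type*) [Field K] [CharZero K]
    (L : Type*) [LieRing L] [LieAlgebra K L]
    (n : ℕ) (hn : 7 ≤ n) (hno : Odd n)
    (x : ℕ → L)
    (hli : LinearIndependent K fun i : Fin n => x (i.1 + 1))
    (hsp : Submodule.span K (Set.range fun i : Fin n => x (i.1 + 1)) = ⊤)
    (hbr2 : ∀ i, 2 ≤ i → i ≤ (n - 1) / 2 → ⁅x i, x (n - i)⁆ = ((-1 : K)) ^ (i + 1) • x (n - 1))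
    (hz : ∀ i j, 1 ≤ i → i ≤ n → 1 ≤ j → j ≤ n →
      ¬(i = 1 ∧ 2 ≤ j ∧ j ≤ n - 2) → ¬(j = 1 ∧ 2 ≤ i ∧ i ≤ n - 2) →
      ¬(2 ≤ i ∧ i ≤ (n - 1) / 2 ∧ j = n - i) → ¬(2 ≤ j ∧ j ≤ (n - 1) / 2 ∧ i = n - j) →
      ⁅x i, x j⁆ = 0) :
    lieIndex K L = 3 := by
  let b := Basis.mk hli hsp.ge
  have : FiniteDimensional K L := b.finiteDimensional_of_finite
  have hrank : finrank K L = n := by simpa using finrank_eq_card_basis b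
  obtain ⟨f, hf⟩ := Projective.exists_dual_ne_zero K (hli.ne_zero ⟨n - 2, by omega⟩)
  have hf : f (x (n - 1)) ≠ 0 := by rwa [show n - 2 + 1 = n - 1 by omega] at hf
  exact le_antisymm
    ((lieIndex_le_finrank_lieStab f).trans
      (finrank_lieStab_le_three (by omega) hno hli hbr2 hz hrank hf))
    (le_lieIndex (three_le_finrank_lieStab (by omega) hno hli hsp hz hrank))

theorem stmt17 (K : Type*) [Field K] [IsAlgClosed K] [CharZero K]
    (L : Type*) [LieRing L] [LieAlgebra K L]
    (n : ℕ) (hn : 7 ≤ n) (hno : Odd n)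
    (x : ℕ → L)
    (hli : LinearIndependent K fun i : Fin n => x (i.1 + 1))
    (hsp : Submodule.span K (Set.range fun i : Fin n => x (i.1 + 1)) = ⊤)
    (hbr1 : ∀ i, 2 ≤ i → i ≤ n - 2 → ⁅x 1, x i⁆ = x (i + 1))
    (hbr2 : ∀ i, 2 ≤ i → i ≤ (n - 1) / 2 → ⁅x i, x (n - i)⁆ = ((-1 : K)) ^ (i + 1) • x (n - 1))
    (hz : ∀ i j, 1 ≤ i → i ≤ n → 1 ≤ j → j ≤ n →
      ¬(i = 1 ∧ 2 ≤ j ∧ j ≤ n - 2) → ¬(j = 1 ∧ 2 ≤ i ∧ i ≤ n - 2) →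
      ¬(2 ≤ i ∧ i ≤ (n - 1) / 2 ∧ j = n - i) → ¬(2 ≤ j ∧ j ≤ (n - 1) / 2 ∧ i = n - j) →
      ⁅x i, x j⁆ = 0) :
    lieIndex K L = 3 :=
  stmt17_general K L n hn hno x hli hsp hbr2 hz
end

section
/- The (2n+1)-dimensional solvable Lie algebra τ_{2n+1}(λ_2) with nilradical Q_{2n}, defined by [x_1,x_k] = x_{k+1} for 2 ≤ k ≤ 2n−2, [x_k, x_{2n+1−k}] = (−1)^k x_{2n} for 2 ≤ k ≤ n, [y,x_1] = x_1, [y,x_k] = (k−2+λ_2) x_k for 2 ≤ k ≤ 2n−2, and [y, x_{2n}] = (2n−3+2λ_2) x_{2n}, has index 1. -/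
open Module

/-!
The form `(u, v) ↦ f ⁅u, v⁆` is alternating, so on an odd-dimensional Lie algebra it is
degenerate and every stabilizer is nonzero. For `f = x₁* + x₂ₙ*`, pairing an element of the
stabilizer with `x₁`, with `x_j` for `2 ≤ j ≤ 2n - 1`, and with `y` kills in turn its
`y`-coordinate, its `x_{2n+1-j}`-coordinate (as `f ⁅x_{2n+1-j}, x_j⁆ = ±1`), and ties its
`x₁`-coordinate to its `x₂ₙ`-coordinate. So that stabilizer is the line through
`x₂ₙ - (2n - 3 + 2λ₂) x₁`.
-/
open LinearMap (BilinForm)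
open scoped Matrix

section LieIndex

variable {K L : Type*} [Field K] [LieRing L] [LieAlgebra K L]

theorem lieIndex_eq_of_forall_le_of_le (m : ℕ)
    (hle : ∀ f : Dual K L, m ≤ finrank K (lieStab K f)) (f₀ : Dual K L)
    (hf₀ : finrank K (lieStab K f₀) ≤ m) : lieIndex K L = m :=
  le_antisymm ((ciInf_le (OrderBot.bddBelow _) f₀).trans hf₀) (le_ciInf hle)

theorem Matrix.det_eq_zero_of_transpose_eq_neg {n R : Type*} [Fintype n] [DecidableEq n]
    [CommRing R] [NoZeroDivisors R] (h2 : (2 : R) ≠ 0) {A : Matrix n n R}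
    (hodd : Odd (Fintype.card n)) (hA : Aᵀ = -A) : A.det = 0 := by
  have h : A.det = -A.det := by
    conv_lhs => rw [← Matrix.det_transpose, hA, Matrix.det_neg, hodd.neg_one_pow, neg_one_mul]
  exact (mul_eq_zero.mp (by linear_combination h : (2 : R) * A.det = 0)).resolve_left h2

def lieForm (f : Dual K L) : BilinForm K L :=
  LinearMap.mk₂ K (fun u v => f ⁅u, v⁆)
    (fun _ _ _ => by rw [add_lie, map_add]) (fun _ _ _ => by rw [smul_lie, map_smul])
    (fun _ _ _ => by rw [lie_add, map_add]) (fun _ _ _ => by rw [lie_smul, map_smul])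

theorem separatingLeft_lieForm_iff (f : Dual K L) :
    (lieForm f).SeparatingLeft ↔ lieStab K f = ⊥ := by
  rw [Submodule.eq_bot_iff]
  rfl

theorem transpose_toMatrix_lieForm {ι : Type*} [Fintype ι] [DecidableEq ι] (b : Basis ι K L)
    (f : Dual K L) :
    (LinearMap.BilinForm.toMatrix b (lieForm f))ᵀ =
      -LinearMap.BilinForm.toMatrix b (lieForm f) := by
  ext i j
  rw [Matrix.transpose_apply, Matrix.neg_apply, LinearMap.BilinForm.toMatrix_apply,
    LinearMap.BilinForm.toMatrix_apply]
  change f ⁅b j, b i⁆ = -f ⁅b i, b j⁆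
  rw [← lie_skew, map_neg]

theorem one_le_finrank_lieStab [FiniteDimensional K L] (h2 : (2 : K) ≠ 0)
    (hodd : Odd (finrank K L)) (f : Dual K L) : 1 ≤ finrank K (lieStab K f) := by
  rw [Nat.one_le_iff_ne_zero, Ne, Submodule.finrank_eq_zero, ← separatingLeft_lieForm_iff]
  intro hsep
  let b := Module.finBasis K L
  exact Matrix.separatingLeft_iff_det_ne_zero.mp
    ((LinearMap.BilinForm.separatingLeft_toMatrix_iff b).mpr hsep)
    (Matrix.det_eq_zero_of_transpose_eq_neg h2 (by simpa using hodd)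
      (transpose_toMatrix_lieForm b f))

end LieIndex

section Tau

variable {K L : Type*} [Field K] [LieRing L] [LieAlgebra K L] {n : ℕ} {x : ℕ → L} {y : L}

theorem exists_eq_sum_smul_add_smul
    (hsp : Submodule.span K (Set.range fun i : Fin (2 * n + 1) =>
      if i.1 < 2 * n then x (i.1 + 1) else y) = ⊤) (w : L) :
    ∃ (a : ℕ → K) (c : K), w = ∑ m ∈ Finset.Icc 1 (2 * n), a m • x m + c • y := by
  obtain ⟨g, rfl⟩ :=
    (Submodule.mem_span_range_iff_exists_fun K).mp (hsp ▸ Submodule.mem_top (x := w))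
  refine ⟨fun m => g (Fin.ofNat _ (m - 1)), g (Fin.last _), ?_⟩
  rw [Fin.sum_univ_castSucc]
  simp only [Fin.val_castSucc, Fin.is_lt, if_true, Fin.val_last, lt_irrefl, if_false]
  congr 1
  rw [← Finset.Ico_add_one_right_eq_Icc, Finset.sum_Ico_eq_sum_range, ← Fin.sum_univ_eq_sum_range]
  refine Finset.sum_congr rfl fun i _ => ?_
  simp [add_comm 1]

theorem exists_dual_apply_eq
    (hli : LinearIndependent K fun i : Fin (2 * n + 1) =>
      if i.1 < 2 * n then x (i.1 + 1) else y)
    (hsp : Submodule.span K (Set.range fun i : Fin (2 * n + 1) =>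
      if i.1 < 2 * n then x (i.1 + 1) else y) = ⊤) (g : ℕ → K) :
    ∃ f : Dual K L, ∀ m, 1 ≤ m → m ≤ 2 * n → f (x m) = g m := by
  let b := Basis.mk hli hsp.ge
  refine ⟨b.constr K fun i => g (i + 1), fun m hm1 hm2 => ?_⟩
  have hx : x m = b ⟨m - 1, by omega⟩ := by
    rw [Basis.mk_apply, if_pos (by omega : m - 1 < 2 * n), Nat.sub_add_cancel hm1]
  rw [hx, Basis.constr_basis, Nat.sub_add_cancel hm1]

variable {f : Dual K L}

theorem apply_lie_x_x_eq_zero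
    (hbr1 : ∀ k, 2 ≤ k → k ≤ 2 * n - 2 → ⁅x 1, x k⁆ = x (k + 1))
    (hz1 : ∀ i j, 1 ≤ i → i ≤ 2 * n → 1 ≤ j → j ≤ 2 * n →
      ¬(i = 1 ∧ 2 ≤ j ∧ j ≤ 2 * n - 2) → ¬(j = 1 ∧ 2 ≤ i ∧ i ≤ 2 * n - 2) →
      ¬(2 ≤ i ∧ i ≤ n ∧ j = 2 * n + 1 - i) → ¬(2 ≤ j ∧ j ≤ n ∧ i = 2 * n + 1 - j) →
      ⁅x i, x j⁆ = 0)
    (hmid : ∀ m, 2 ≤ m → m ≤ 2 * n - 1 → f (x m) = 0) {i j : ℕ}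
    (hi1 : 1 ≤ i) (hi2 : i ≤ 2 * n) (hj1 : 1 ≤ j) (hj2 : j ≤ 2 * n)
    (hij : ¬(2 ≤ i ∧ 2 ≤ j ∧ i + j = 2 * n + 1)) : f ⁅x i, x j⁆ = 0 := by
  have hx1 : ∀ k, 1 ≤ k → k ≤ 2 * n → f ⁅x 1, x k⁆ = 0 := by
    intro k hk1 hk2
    rcases (show k = 1 ∨ (2 ≤ k ∧ k ≤ 2 * n - 2) ∨ 2 * n - 2 < k by omega) with
      rfl | ⟨hk, hk'⟩ | hk
    · rw [lie_self, map_zero]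
    · rw [hbr1 k hk hk', hmid _ (by omega) (by omega)]
    · rw [hz1 1 k le_rfl (by omega) hk1 hk2 (by omega) (by omega) (by omega) (by omega),
        map_zero]
  obtain rfl | hi := eq_or_ne i 1
  · exact hx1 j hj1 hj2
  obtain rfl | hj := eq_or_ne j 1
  · rw [← lie_skew, map_neg, hx1 i hi1 hi2, neg_zero]
  rw [hz1 i j hi1 hi2 hj1 hj2 (by omega) (by omega) (by omega) (by omega), map_zero]

theorem apply_lie_x_x_ne_zero
    (hbr2 : ∀ k, 2 ≤ k → k ≤ n → ⁅x k, x (2 * n + 1 - k)⁆ = ((-1 : K)) ^ k • x (2 * n))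
    (hf : f (x (2 * n)) ≠ 0) {i j : ℕ} (hi : 2 ≤ i) (hj : 2 ≤ j) (hij : i + j = 2 * n + 1) :
    f ⁅x i, x j⁆ ≠ 0 := by
  have hsign : ∀ k, (-1 : K) ^ k ≠ 0 := fun k => pow_ne_zero k (neg_ne_zero.mpr one_ne_zero)
  rcases le_or_gt i n with h | h
  · obtain rfl : j = 2 * n + 1 - i := by omega
    rw [hbr2 i hi h, map_smul, smul_eq_mul]
    exact mul_ne_zero (hsign i) hf
  · obtain rfl : i = 2 * n + 1 - j := by omega
    rw [← lie_skew, hbr2 j hj (by omega), map_neg, neg_ne_zero, map_smul, smul_eq_mul]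
    exact mul_ne_zero (hsign j) hf

theorem apply_lie_y_x_eq_zero (d : ℕ → K)
    (hbr4 : ∀ k, 2 ≤ k → k ≤ 2 * n - 2 → ⁅y, x k⁆ = d k • x k)
    (hz2 : ⁅y, x (2 * n - 1)⁆ = 0) (hmid : ∀ m, 2 ≤ m → m ≤ 2 * n - 1 → f (x m) = 0)
    {k : ℕ} (hk1 : 2 ≤ k) (hk2 : k ≤ 2 * n - 1) : f ⁅y, x k⁆ = 0 := by
  rcases (show k ≤ 2 * n - 2 ∨ k = 2 * n - 1 by omega) with h | rfl
  · rw [hbr4 k hk1 h, map_smul, hmid k hk1 hk2, smul_zero]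
  · rw [hz2, map_zero]

theorem lieStab_le_span_singleton (hn : 1 ≤ n)
    (hsp : Submodule.span K (Set.range fun i : Fin (2 * n + 1) =>
      if i.1 < 2 * n then x (i.1 + 1) else y) = ⊤)
    (hbr1 : ∀ k, 2 ≤ k → k ≤ 2 * n - 2 → ⁅x 1, x k⁆ = x (k + 1))
    (hbr2 : ∀ k, 2 ≤ k → k ≤ n → ⁅x k, x (2 * n + 1 - k)⁆ = ((-1 : K)) ^ k • x (2 * n))
    (hbr3 : ⁅y, x 1⁆ = x 1) (d : ℕ → K)
    (hbr4 : ∀ k, 2 ≤ k → k ≤ 2 * n - 2 → ⁅y, x k⁆ = d k • x k)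
    (μ : K) (hbr5 : ⁅y, x (2 * n)⁆ = μ • x (2 * n))
    (hz1 : ∀ i j, 1 ≤ i → i ≤ 2 * n → 1 ≤ j → j ≤ 2 * n →
      ¬(i = 1 ∧ 2 ≤ j ∧ j ≤ 2 * n - 2) → ¬(j = 1 ∧ 2 ≤ i ∧ i ≤ 2 * n - 2) →
      ¬(2 ≤ i ∧ i ≤ n ∧ j = 2 * n + 1 - i) → ¬(2 ≤ j ∧ j ≤ n ∧ i = 2 * n + 1 - j) →
      ⁅x i, x j⁆ = 0)
    (hz2 : ⁅y, x (2 * n - 1)⁆ = 0)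
    (hf1 : f (x 1) = 1) (hf2n : f (x (2 * n)) = 1)
    (hmid : ∀ m, 2 ≤ m → m ≤ 2 * n - 1 → f (x m) = 0) :
    lieStab K f ≤ K ∙ (x (2 * n) - μ • x 1) := by
  intro w hw
  obtain ⟨a, c, rfl⟩ := exists_eq_sum_smul_add_smul hsp w
  have mem_one : 1 ∈ Finset.Icc 1 (2 * n) := Finset.mem_Icc.mpr ⟨le_rfl, by omega⟩
  have mem_top : 2 * n ∈ Finset.Icc 1 (2 * n) := Finset.mem_Icc.mpr ⟨by omega, le_rfl⟩
  have key : ∀ z, ∑ m ∈ Finset.Icc 1 (2 * n), a m * f ⁅x m, z⁆ + c * f ⁅y, z⁆ = 0 := by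
    intro z
    simpa only [add_lie, sum_lie, smul_lie, map_add, map_sum, map_smul, smul_eq_mul] using hw z
  have hc : c = 0 := by
    have h := key (x 1)
    rwa [Finset.sum_eq_zero fun m hm => by
        rw [Finset.mem_Icc] at hm
        rw [apply_lie_x_x_eq_zero hbr1 hz1 hmid hm.1 hm.2 le_rfl (by omega) (by omega), mul_zero],
      hbr3, hf1, zero_add, mul_one] at h
  have ha : ∀ k, 2 ≤ k → k ≤ 2 * n - 1 → a k = 0 := by
    intro k hk1 hk2
    have h := key (x (2 * n + 1 - k))
    rw [Finset.sum_eq_single k (fun m hm hmk => by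
        rw [Finset.mem_Icc] at hm
        rw [apply_lie_x_x_eq_zero hbr1 hz1 hmid hm.1 hm.2 (by omega) (by omega) (by omega),
          mul_zero])
      (fun hk => absurd (Finset.mem_Icc.mpr ⟨by omega, by omega⟩) hk),
      hc, zero_mul, add_zero] at h
    exact (mul_eq_zero.mp h).resolve_right
      (apply_lie_x_x_ne_zero hbr2 (hf2n ▸ one_ne_zero) hk1 (by omega) (by omega))
  have ha1 : a 1 = -μ * a (2 * n) := by
    have h := key y
    rw [Finset.sum_eq_add_of_mem 1 (2 * n) mem_one mem_top (by omega) fun m hm hm' => by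
        rw [Finset.mem_Icc] at hm
        rw [← lie_skew, map_neg, apply_lie_y_x_eq_zero d hbr4 hz2 hmid (by omega) (by omega),
          neg_zero, mul_zero],
      ← lie_skew (x 1) y, ← lie_skew (x (2 * n)) y, hbr3, hbr5, lie_self] at h
    simp only [map_neg, map_smul, map_zero, hf1, hf2n, smul_eq_mul] at h
    linear_combination -h
  rw [Finset.sum_eq_add_of_mem 1 (2 * n) mem_one mem_top (by omega) fun m hm hm' => by
      rw [Finset.mem_Icc] at hm
      rw [ha m (by omega) (by omega), zero_smul],
    hc, zero_smul, add_zero, ha1]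
  exact Submodule.mem_span_singleton.mpr ⟨a (2 * n), by module⟩

end Tau

theorem stmt19 (K : Type*) [RCLike K]
    (L : Type*) [LieRing L] [LieAlgebra K L]
    (n : ℕ) (hn : 2 ≤ n) (l : K)
    (x : ℕ → L) (y : L)
    (hli : LinearIndependent K fun i : Fin (2 * n + 1) =>
      if i.1 < 2 * n then x (i.1 + 1) else y)
    (hsp : Submodule.span K (Set.range fun i : Fin (2 * n + 1) =>
      if i.1 < 2 * n then x (i.1 + 1) else y) = ⊤)
    (hbr1 : ∀ k, 2 ≤ k → k ≤ 2 * n - 2 → ⁅x 1, x k⁆ = x (k + 1))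
    (hbr2 : ∀ k, 2 ≤ k → k ≤ n → ⁅x k, x (2 * n + 1 - k)⁆ = ((-1 : K)) ^ k • x (2 * n))
    (hbr3 : ⁅y, x 1⁆ = x 1)
    (hbr4 : ∀ k, 2 ≤ k → k ≤ 2 * n - 2 → ⁅y, x k⁆ = ((k : K) - 2 + l) • x k)
    (hbr5 : ⁅y, x (2 * n)⁆ = ((2 * n : K) - 3 + 2 * l) • x (2 * n))
    (hz1 : ∀ i j, 1 ≤ i → i ≤ 2 * n → 1 ≤ j → j ≤ 2 * n →
      ¬(i = 1 ∧ 2 ≤ j ∧ j ≤ 2 * n - 2) → ¬(j = 1 ∧ 2 ≤ i ∧ i ≤ 2 * n - 2) →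
      ¬(2 ≤ i ∧ i ≤ n ∧ j = 2 * n + 1 - i) → ¬(2 ≤ j ∧ j ≤ n ∧ i = 2 * n + 1 - j) →
      ⁅x i, x j⁆ = 0)
    (hz2 : ⁅y, x (2 * n - 1)⁆ = 0) :
    lieIndex K L = 1 := by
  let b := Basis.mk hli hsp.ge
  have : FiniteDimensional K L := Module.Finite.of_basis b
  have hodd : Odd (finrank K L) := by
    rw [finrank_eq_card_basis b, Fintype.card_fin]
    exact odd_two_mul_add_one n
  obtain ⟨f, hf⟩ := exists_dual_apply_eq hli hsp fun m => if m = 1 ∨ m = 2 * n then 1 else 0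
  have hstab := lieStab_le_span_singleton (f := f) (by omega) hsp hbr1 hbr2 hbr3 _ hbr4 _ hbr5
    hz1 hz2 (by simp [hf 1 le_rfl (by omega)]) (by simp [hf (2 * n) (by omega) le_rfl])
    fun m hm1 hm2 => by rw [hf m (by omega) (by omega), if_neg (by omega)]
  refine lieIndex_eq_of_forall_le_of_le 1 (one_le_finrank_lieStab two_ne_zero hodd) f ?_
  calc finrank K (lieStab K f) ≤ finrank K (K ∙ _) := Submodule.finrank_mono hstab
    _ ≤ 1 := (finrank_span_le_card _).trans_eq (by simp)
end
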